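/- Let Φ be continuous, positive, T-periodic with mean Φ̄ and 0 < σ̃ < Φ̄. Then the positive T-periodic solution of R' = μR(Φ(t)P₀(R) − σ̃/3) (μ > 0) is unique. -/

import Mathlib

noncomputable def P0 (x : ℝ) : ℝ := (x * (Real.cosh x / Real.sinh x) - 1) / x ^ 2

open Real Set

/-!
`P0` is strictly decreasing on `(0, ∞)`: the sign of its derivative is that of
`2 sinh² x - x sinh x cosh x - x²`. This is negative because
`x sinh x cosh x + x² - 2 sinh² x`, its derivative and `x cosh x - sinh x` vanish at `0`,
and each has a positive derivative on `(0, ∞)` once the next one is known to be positive.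

For two positive solutions, `V = (log R₁ - log R₂)²` is a Lyapunov function:
`V' = 2 (log R₁ - log R₂) μ Φ (P0 R₁ - P0 R₂) ≤ 0`, with equality only where `R₁ = R₂`.
Being antitone and `T`-periodic, `V` is constant, so `V'` vanishes and `R₁ = R₂`.
-/

lemma lt_of_hasDerivAt_pos {f f' : ℝ → ℝ} {a x : ℝ} (hf : ∀ y, HasDerivAt f (f' y) y)
    (hf' : ∀ y, a < y → 0 < f' y) (hx : a < x) : f a < f x :=
  strictMonoOn_of_hasDerivWithinAt_pos (convex_Ici a)
    (fun y _ => (hf y).continuousAt.continuousWithinAt) (fun y _ => (hf y).hasDerivWithinAt)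
    (fun y hy => hf' y (by rwa [interior_Ici] at hy)) self_mem_Ici hx.le hx

lemma Real.sinh_lt_mul_cosh {x : ℝ} (hx : 0 < x) : sinh x < x * cosh x := by
  have key := lt_of_hasDerivAt_pos (f := fun x => x * cosh x - sinh x) (f' := fun x => x * sinh x)
    (fun y => (((hasDerivAt_id y).mul (hasDerivAt_cosh y)).sub (hasDerivAt_sinh y)).congr_deriv
      (by simp only [id_eq]; ring))
    (fun y hy => mul_pos hy (sinh_pos_iff.2 hy)) hx
  simpa using key

lemma Real.three_mul_sinh_mul_cosh_lt {x : ℝ} (hx : 0 < x) :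
    3 * (sinh x * cosh x) < x * (cosh x ^ 2 + sinh x ^ 2) + 2 * x := by
  have key := lt_of_hasDerivAt_pos
    (f := fun x => x * (cosh x ^ 2 + sinh x ^ 2) + 2 * x - 3 * (sinh x * cosh x))
    (f' := fun x => 4 * sinh x * (x * cosh x - sinh x))
    (fun y => ((((hasDerivAt_id y).mul (((hasDerivAt_cosh y).pow 2).add
      ((hasDerivAt_sinh y).pow 2))).add ((hasDerivAt_id y).const_mul 2)).sub
      (((hasDerivAt_sinh y).mul (hasDerivAt_cosh y)).const_mul 3)).congr_deriv
      (by
        simp only [id_eq, Pi.add_apply, Pi.pow_apply]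
        push_cast
        linear_combination (-2) * cosh_sq y))
    (fun y hy => mul_pos (mul_pos four_pos (sinh_pos_iff.2 hy)) (sub_pos.2 (sinh_lt_mul_cosh hy)))
    hx
  simpa using key

lemma Real.two_mul_sinh_sq_lt {x : ℝ} (hx : 0 < x) :
    2 * sinh x ^ 2 < x * sinh x * cosh x + x ^ 2 := by
  have key := lt_of_hasDerivAt_pos
    (f := fun x => x * sinh x * cosh x + x ^ 2 - 2 * sinh x ^ 2)
    (f' := fun x => x * (cosh x ^ 2 + sinh x ^ 2) + 2 * x - 3 * (sinh x * cosh x))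
    (fun y => ((((hasDerivAt_id y).mul (hasDerivAt_sinh y)).mul (hasDerivAt_cosh y)).add
      ((hasDerivAt_id y).pow 2)).sub (((hasDerivAt_sinh y).pow 2).const_mul 2) |>.congr_deriv
      (by simp only [id_eq, Pi.mul_apply]; push_cast; ring))
    (fun y hy => sub_pos.2 (three_mul_sinh_mul_cosh_lt hy)) hx
  simpa using key

lemma hasDerivAt_P0 {x : ℝ} (hx : 0 < x) :
    HasDerivAt P0 (-(x * sinh x * cosh x + x ^ 2 - 2 * sinh x ^ 2) / (x ^ 3 * sinh x ^ 2)) x := by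
  have hs : sinh x ≠ 0 := (sinh_pos_iff.2 hx).ne'
  have hnum : HasDerivAt (fun y => y * cosh y - sinh y) (x * sinh x) x :=
    (((hasDerivAt_id x).mul (hasDerivAt_cosh x)).sub (hasDerivAt_sinh x)).congr_deriv
      (by simp only [id_eq]; ring)
  have hden : HasDerivAt (fun y => y ^ 2 * sinh y) (2 * x * sinh x + x ^ 2 * cosh x) x :=
    ((hasDerivAt_pow 2 x).mul (hasDerivAt_sinh x)).congr_deriv (by push_cast; ring)
  refine ((hnum.div hden (by positivity)).congr_deriv ?_).congr_of_eventuallyEq ?_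
  · field_simp
    linear_combination (-(x ^ 2)) * cosh_sq x
  · filter_upwards [Ioi_mem_nhds hx] with y hy
    have : sinh y ≠ 0 := (sinh_pos_iff.2 hy).ne'
    simp only [P0, Pi.div_apply]
    field_simp

lemma P0_strictAntiOn : StrictAntiOn P0 (Ioi 0) := by
  refine strictAntiOn_of_hasDerivWithinAt_neg (convex_Ioi 0)
    (f' := fun x => -(x * sinh x * cosh x + x ^ 2 - 2 * sinh x ^ 2) / (x ^ 3 * sinh x ^ 2))
    (fun x hx => (hasDerivAt_P0 hx).continuousAt.continuousWithinAt) ?_ ?_ <;>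
    rw [interior_Ioi]
  · exact fun x hx => (hasDerivAt_P0 hx).hasDerivWithinAt
  · intro x (hx : 0 < x)
    have : 0 < sinh x := sinh_pos_iff.2 hx
    exact div_neg_of_neg_of_pos (neg_neg_of_pos (sub_pos.2 (two_mul_sinh_sq_lt hx)))
      (by positivity)

lemma log_sub_log_mul_sub_neg {f : ℝ → ℝ} (hf : StrictAntiOn f (Ioi 0)) {x y : ℝ}
    (hx : 0 < x) (hy : 0 < y) (hxy : x ≠ y) : (log x - log y) * (f x - f y) < 0 := by
  rcases hxy.lt_or_gt with h | h
  · exact mul_neg_of_neg_of_pos (sub_neg.2 (log_lt_log hx h)) (sub_pos.2 (hf hx hy h))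
  · exact mul_neg_of_pos_of_neg (sub_pos.2 (log_lt_log hy h)) (sub_neg.2 (hf hy hx h))

lemma hasDerivAt_log_of_eq_mul {R : ℝ → ℝ} {g t : ℝ} (hR : HasDerivAt R (R t * g) t)
    (hpos : 0 < R t) : HasDerivAt (fun s => log (R s)) g t :=
  (hR.log hpos.ne').congr_deriv (mul_div_cancel_left₀ g hpos.ne')

lemma AntitoneOn.eq_of_periodic {V : ℝ → ℝ} (hV : AntitoneOn V (Ici 0)) {T : ℝ} (hT : 0 < T)
    (hper : ∀ t, 0 ≤ t → V (t + T) = V t) {t : ℝ} (ht : 0 ≤ t) : V t = V 0 := by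
  have hmul : ∀ n : ℕ, V (n * T) = V 0 := by
    intro n
    induction n with
    | zero => simp
    | succ k ih =>
      rw [Nat.cast_succ, add_one_mul, hper _ (by positivity), ih]
  obtain ⟨n, hn⟩ := exists_nat_ge (t / T)
  have htn : t ≤ n * T := (div_le_iff₀ hT).1 hn
  have h₁ : V t ≤ V 0 := hV self_mem_Ici ht ht
  have h₂ : V (n * T) ≤ V t := hV ht (by simp only [mem_Ici]; positivity) htn
  linarith [hmul n]

theorem eq_of_periodic_of_strictAntiOn {F : ℝ → ℝ → ℝ}
    (hF : ∀ t, 0 ≤ t → StrictAntiOn (F t) (Ioi 0)) {T : ℝ} (hT : 0 < T) {R₁ R₂ : ℝ → ℝ}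
    (hR₁pos : ∀ t, 0 ≤ t → 0 < R₁ t) (hR₁ : ∀ t, 0 ≤ t → HasDerivAt R₁ (R₁ t * F t (R₁ t)) t)
    (hR₁per : ∀ t, 0 ≤ t → R₁ (t + T) = R₁ t)
    (hR₂pos : ∀ t, 0 ≤ t → 0 < R₂ t) (hR₂ : ∀ t, 0 ≤ t → HasDerivAt R₂ (R₂ t * F t (R₂ t)) t)
    (hR₂per : ∀ t, 0 ≤ t → R₂ (t + T) = R₂ t) {t : ℝ} (ht : 0 ≤ t) : R₁ t = R₂ t := by
  set W : ℝ → ℝ := fun s => log (R₁ s) - log (R₂ s)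
  set V : ℝ → ℝ := fun s => W s ^ 2
  set D : ℝ → ℝ := fun s => W s * (F s (R₁ s) - F s (R₂ s))
  have hV : ∀ s, 0 ≤ s → HasDerivAt V (2 * D s) s := fun s hs =>
    ((hasDerivAt_log_of_eq_mul (hR₁ s hs) (hR₁pos s hs)).sub
      (hasDerivAt_log_of_eq_mul (hR₂ s hs) (hR₂pos s hs))).pow 2 |>.congr_deriv
      (by simp only [Pi.sub_apply, W, D]; push_cast; ring)
  have hsign : ∀ s, 0 ≤ s → R₁ s ≠ R₂ s → D s < 0 :=
    fun s hs => log_sub_log_mul_sub_neg (hF s hs) (hR₁pos s hs) (hR₂pos s hs)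
  have hanti : AntitoneOn V (Ici 0) := by
    refine antitoneOn_of_hasDerivWithinAt_nonpos (convex_Ici 0) (f' := fun s => 2 * D s)
      (fun s hs => (hV s hs).continuousAt.continuousWithinAt) ?_ ?_ <;> rw [interior_Ici]
    · exact fun s hs => (hV s (le_of_lt hs)).hasDerivWithinAt
    · intro s (hs : 0 < s)
      by_cases h : R₁ s = R₂ s
      · simp [D, W, h]
      · linarith [hsign s hs.le h]
  have hconst : ∀ s, 0 ≤ s → V s = V 0 := fun s hs =>
    hanti.eq_of_periodic hT (fun s hs => by simp only [V, W, hR₁per s hs, hR₂per s hs]) hs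
  have hpos : ∀ s, 0 < s → R₁ s = R₂ s := by
    intro s hs
    by_contra h
    have hzero : HasDerivAt V 0 s := (hasDerivAt_const s (V 0)).congr_of_eventuallyEq
      (Filter.eventually_of_mem (Ioi_mem_nhds hs) fun r hr => hconst r (le_of_lt hr))
    linarith [(hV s hs.le).unique hzero, hsign s hs.le h]
  -- At `t = 0` only a one-sided derivative is available; periodicity moves `t` into `(0, ∞)`.
  rw [← hR₁per t ht, ← hR₂per t ht]
  exact hpos _ (by linarith)

theorem periodic_solution_unique_general
    (T : ℝ) (hT : 0 < T) (Φ : ℝ → ℝ)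
    (hΦpos : ∀ t, 0 < Φ t)
    (μ σ : ℝ) (hμ : 0 < μ)
    (R₁ R₂ : ℝ → ℝ)
    (hR₁pos : ∀ t, 0 ≤ t → 0 < R₁ t)
    (hR₁ODE : ∀ t, 0 ≤ t → HasDerivAt R₁ (μ * R₁ t * (Φ t * P0 (R₁ t) - σ / 3)) t)
    (hR₁per : ∀ t, 0 ≤ t → R₁ (t + T) = R₁ t)
    (hR₂pos : ∀ t, 0 ≤ t → 0 < R₂ t)
    (hR₂ODE : ∀ t, 0 ≤ t → HasDerivAt R₂ (μ * R₂ t * (Φ t * P0 (R₂ t) - σ / 3)) t)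
    (hR₂per : ∀ t, 0 ≤ t → R₂ (t + T) = R₂ t) :
    ∀ t, 0 ≤ t → R₁ t = R₂ t := by
  set F : ℝ → ℝ → ℝ := fun t x => μ * (Φ t * P0 x - σ / 3)
  have hF : ∀ t, 0 ≤ t → StrictAntiOn (F t) (Ioi 0) := fun t _ x hx y hy hxy =>
    mul_lt_mul_of_pos_left
      (sub_lt_sub_right (mul_lt_mul_of_pos_left (P0_strictAntiOn hx hy hxy) (hΦpos t)) _) hμ
  have hODE : ∀ R : ℝ → ℝ, (∀ t, 0 ≤ t → HasDerivAt R (μ * R t * (Φ t * P0 (R t) - σ / 3)) t) →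
      ∀ t, 0 ≤ t → HasDerivAt R (R t * F t (R t)) t := fun R hR t ht =>
    (hR t ht).congr_deriv (by ring)
  exact fun t ht => eq_of_periodic_of_strictAntiOn hF hT hR₁pos (hODE R₁ hR₁ODE) hR₁per hR₂pos
    (hODE R₂ hR₂ODE) hR₂per ht

theorem periodic_solution_unique
    (T : ℝ) (hT : 0 < T) (Φ : ℝ → ℝ) (hΦc : Continuous Φ)
    (hΦpos : ∀ t, 0 < Φ t) (hΦper : ∀ t, Φ (t + T) = Φ t)
    (μ σ : ℝ) (hμ : 0 < μ) (hσ : 0 < σ)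
    (hσlt : σ < (1 / T) * ∫ t in (0 : ℝ)..T, Φ t)
    (R₁ R₂ : ℝ → ℝ)
    (hR₁pos : ∀ t, 0 ≤ t → 0 < R₁ t)
    (hR₁ODE : ∀ t, 0 ≤ t → HasDerivAt R₁ (μ * R₁ t * (Φ t * P0 (R₁ t) - σ / 3)) t)
    (hR₁per : ∀ t, 0 ≤ t → R₁ (t + T) = R₁ t)
    (hR₂pos : ∀ t, 0 ≤ t → 0 < R₂ t)
    (hR₂ODE : ∀ t, 0 ≤ t → HasDerivAt R₂ (μ * R₂ t * (Φ t * P0 (R₂ t) - σ / 3)) t)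
    (hR₂per : ∀ t, 0 ≤ t → R₂ (t + T) = R₂ t) :
    ∀ t, 0 ≤ t → R₁ t = R₂ t :=
  periodic_solution_unique_general T hT Φ hΦpos μ σ hμ R₁ R₂ hR₁pos hR₁ODE hR₁per hR₂pos hR₂ODE
    hR₂per
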